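/- The category of Kripke frames and p-morphisms has all small colimits, and the forgetful functor to the category of sets preserves them. Moreover, the full subcategory of locally finite Kripke frames is closed under these colimits (a colimit of locally finite Kripke frames is locally finite). -/

import Mathlib

open CategoryTheory

universe u

/-- A p-morphism between Kripke frames `(W, rW)` and `(V, rV)`:
a function that is stable and open. -/
def IsPMorphism {W V : Type*} (rW : W → W → Prop) (rV : V → V → Prop) (f : W → V) : Prop :=
  (∀ ⦃w w'⦄, rW w w' → rV (f w) (f w')) ∧
  (∀ w v', rV (f w) v' → ∃ w', rW w w' ∧ f w' = v')

/-- A Kripke frame: a set together with a binary relation on it. -/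
structure KFrame : Type (u + 1) where
  carrier : Type u
  rel : carrier → carrier → Prop

instance : CoeSort KFrame.{u} (Type u) := ⟨KFrame.carrier⟩

/-- Bundled p-morphisms between Kripke frames. -/
structure PMor (W V : KFrame.{u}) : Type u where
  toFun : W → V
  isPMorphism : IsPMorphism W.rel V.rel toFun

@[ext] lemma PMor.ext {W V : KFrame.{u}} {f g : PMor W V} (h : f.toFun = g.toFun) : f = g := by
  cases f; cases g; simpa using h

/-- The category `KFr` of Kripke frames and p-morphisms. -/
instance : Category KFrame.{u} where
  Hom := PMor
  id W := ⟨id, fun _ _ h => h, fun w v' h => ⟨v', h, rfl⟩⟩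
  comp f g := ⟨g.toFun ∘ f.toFun,
    fun _ _ h => g.isPMorphism.1 (f.isPMorphism.1 h),
    fun w z h => by
      obtain ⟨v', hv', hgz⟩ := g.isPMorphism.2 _ z h
      obtain ⟨w', hw', hfv⟩ := f.isPMorphism.2 w v' hv'
      exact ⟨w', hw', by simp [Function.comp, hfv, hgz]⟩⟩
  id_comp f := PMor.ext rfl
  comp_id f := PMor.ext rfl
  assoc f g h := PMor.ext rfl

/-- A Kripke frame is locally finite if for each point `w` the set `w*` of points
reachable from `w` by a finite chain is finite. -/
def KFrame.LocallyFinite (W : KFrame.{u}) : Prop :=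
  ∀ w : W.carrier, {w' | Relation.ReflTransGen W.rel w w'}.Finite

/-- The forgetful functor from the category of Kripke frames and p-morphisms to
the category of sets. -/
def forgetKFr : KFrame.{u} ⥤ Type u where
  obj W := W.carrier
  map f := TypeCat.ofHom f.toFun
  map_id _ := rfl
  map_comp _ _ := rfl

namespace KColim

variable {J : Type u} [SmallCategory J] (D : J ⥤ KFrame.{u})

/-- Points of the disjoint union of the diagram. -/
abbrev Pre := Σ j : J, (D.obj j).carrier

/-- The gluing relation. -/
def R : Pre D → Pre D → Prop := fun p q =>
  ∃ φ : p.1 ⟶ q.1, (D.map φ).toFun p.2 = q.2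

/-- Carrier of the colimit. -/
def Q : Type u := Quot (R D)

/-- Canonical injection into the colimit carrier. -/
def mk (j : J) (x : (D.obj j).carrier) : Q D := Quot.mk _ ⟨j, x⟩

/-- Relation on the colimit carrier. -/
def relQ : Q D → Q D → Prop := fun c c' =>
  ∃ (j : J) (x y : (D.obj j).carrier), (D.obj j).rel x y ∧ mk D j x = c ∧ mk D j y = c'

/-- The colimit frame. -/
def frame : KFrame.{u} := ⟨Q D, relQ D⟩

lemma key : ∀ {p q : Pre D}, Relation.EqvGen (R D) p q →
    (∀ b, (D.obj p.1).rel p.2 b → ∃ b', (D.obj q.1).rel q.2 b' ∧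
      Quot.mk (R D) ⟨p.1, b⟩ = Quot.mk (R D) ⟨q.1, b'⟩) ∧
    (∀ b, (D.obj q.1).rel q.2 b → ∃ b', (D.obj p.1).rel p.2 b' ∧
      Quot.mk (R D) ⟨q.1, b⟩ = Quot.mk (R D) ⟨p.1, b'⟩) := by
  intro p q h
  induction h with
  | rel p q hpq =>
    obtain ⟨φ, hφ⟩ := hpq
    constructor
    · intro b hb
      refine ⟨(D.map φ).toFun b, ?_, Quot.sound ⟨φ, rfl⟩⟩
      rw [← hφ]; exact (D.map φ).isPMorphism.1 hb
    · intro b hb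
      rw [← hφ] at hb
      obtain ⟨b', hb', hfb⟩ := (D.map φ).isPMorphism.2 _ _ hb
      exact ⟨b', hb', by rw [← hfb]; exact (Quot.sound ⟨φ, rfl⟩).symm⟩
  | refl p => exact ⟨fun b hb => ⟨b, hb, rfl⟩, fun b hb => ⟨b, hb, rfl⟩⟩
  | symm p q _ ih => exact ⟨ih.2, ih.1⟩
  | trans p q r _ _ ih1 ih2 =>
    constructor
    · intro b hb
      obtain ⟨b', h1, e1⟩ := ih1.1 b hb
      obtain ⟨b'', h2, e2⟩ := ih2.1 b' h1
      exact ⟨b'', h2, e1.trans e2⟩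
    · intro b hb
      obtain ⟨b', h1, e1⟩ := ih2.2 b hb
      obtain ⟨b'', h2, e2⟩ := ih1.2 b' h1
      exact ⟨b'', h2, e1.trans e2⟩

lemma leg_open {j : J} (x : (D.obj j).carrier) {c' : Q D} (h : relQ D (mk D j x) c') :
    ∃ x', (D.obj j).rel x x' ∧ mk D j x' = c' := by
  obtain ⟨k, a, b, hab, ha, hb⟩ := h
  have he : Relation.EqvGen (R D) ⟨k, a⟩ ⟨j, x⟩ := Quot.eqvGen_exact ha
  obtain ⟨x', hx', he'⟩ := (key D he).1 b hab
  exact ⟨x', hx', he'.symm.trans hb⟩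

/-- The colimit cocone legs. -/
def leg (j : J) : D.obj j ⟶ frame D :=
  ⟨mk D j, fun x y h => ⟨j, x, y, h, rfl, rfl⟩, fun x _ h => leg_open D x h⟩

/-- The colimit cocone. -/
def cocone : Limits.Cocone D where
  pt := frame D
  ι :=
    { app := leg D
      naturality := fun j k φ => PMor.ext (funext fun x => (Quot.sound ⟨φ, rfl⟩).symm) }

lemma desc_sound (s : Limits.Cocone D) :
    ∀ (p q : Pre D), R D p q → (s.ι.app p.1).toFun p.2 = (s.ι.app q.1).toFun q.2 := by
  rintro ⟨j, x⟩ ⟨k, y⟩ ⟨φ, hφ⟩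
  have h := congrArg PMor.toFun (s.ι.naturality φ)
  have h' := congrFun h x
  simp only at h'
  calc (s.ι.app j).toFun x = (s.ι.app k).toFun ((D.map φ).toFun x) := h'.symm
    _ = (s.ι.app k).toFun y := by rw [hφ]

/-- The underlying function of the descent morphism. -/
def descFun (s : Limits.Cocone D) : Q D → s.pt.carrier :=
  Quot.lift (fun p => (s.ι.app p.1).toFun p.2) (desc_sound D s)

/-- The descent p-morphism. -/
def descMor (s : Limits.Cocone D) : frame D ⟶ s.pt where
  toFun := descFun D s
  isPMorphism := by
    constructor
    · rintro c c' ⟨j, x, y, h, rfl, rfl⟩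
      exact (s.ι.app j).isPMorphism.1 h
    · intro c v' h
      induction c using Quot.ind with
      | _ p =>
        obtain ⟨j, x⟩ := p
        obtain ⟨x', hx', hfx⟩ := (s.ι.app j).isPMorphism.2 x v' h
        exact ⟨mk D j x', ⟨j, x, x', hx', rfl, rfl⟩, hfx⟩

/-- The cocone is a colimit. -/
def isColimit : Limits.IsColimit (cocone D) where
  desc := descMor D
  fac s j := PMor.ext rfl
  uniq s m hm := PMor.ext (funext fun c => by
    induction c using Quot.ind with
    | _ p => exact congrFun (congrArg PMor.toFun (hm p.1)) p.2)

/-- The image of the colimit cocone under the forgetful functor is a colimit in types. -/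
def isColimitType : Limits.IsColimit (forgetKFr.mapCocone (cocone D)) where
  desc s := TypeCat.ofHom (Quot.lift (fun (p : Pre D) => s.ι.app p.1 p.2) (by
    rintro ⟨j, x⟩ ⟨k, y⟩ ⟨φ, hφ⟩
    have h' := types_congr_hom (s.ι.naturality φ) x
    simp [forgetKFr] at h'
    calc s.ι.app j x = s.ι.app k ((D.map φ).toFun x) := h'.symm
      _ = s.ι.app k y := by rw [hφ]))
  fac s j := rfl
  uniq s m hm := ConcreteCategory.hom_ext _ _ fun c => by
    induction c using Quot.ind with
    | _ p => exact types_congr_hom (hm p.1) p.2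

lemma reach {j : J} (x : (D.obj j).carrier) {c' : Q D}
    (h : Relation.ReflTransGen (relQ D) (mk D j x) c') :
    ∃ x', Relation.ReflTransGen (D.obj j).rel x x' ∧ mk D j x' = c' := by
  induction h with
  | refl => exact ⟨x, Relation.ReflTransGen.refl, rfl⟩
  | tail _ h2 ih =>
    obtain ⟨x₁, hx₁, rfl⟩ := ih
    obtain ⟨x₂, hx₂, hmk⟩ := leg_open D x₁ h2
    exact ⟨x₂, hx₁.tail hx₂, hmk⟩

lemma frame_locallyFinite (hD : ∀ j : J, (D.obj j).LocallyFinite) :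
    (frame D).LocallyFinite := by
  intro c
  induction c using Quot.ind with
  | _ p =>
    obtain ⟨j, x⟩ := p
    have hsub : {c' | Relation.ReflTransGen (relQ D) (mk D j x) c'} ⊆
        mk D j '' {x' | Relation.ReflTransGen (D.obj j).rel x x'} := by
      intro c' hc'
      obtain ⟨x', hx', hmk⟩ := reach D x hc'
      exact ⟨x', hx', hmk⟩
    exact ((hD j x).image (mk D j)).subset hsub

end KColim

lemma locallyFinite_of_surjective {W V : KFrame.{u}} (f : W ⟶ V)
    (hs : Function.Surjective f.toFun) (hW : W.LocallyFinite) : V.LocallyFinite := by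
  intro v
  obtain ⟨w, rfl⟩ := hs v
  have hsub : {v' | Relation.ReflTransGen V.rel (f.toFun w) v'} ⊆
      f.toFun '' {w' | Relation.ReflTransGen W.rel w w'} := by
    intro v' hv'
    have : ∀ v', Relation.ReflTransGen V.rel (f.toFun w) v' →
        ∃ w', Relation.ReflTransGen W.rel w w' ∧ f.toFun w' = v' := by
      intro v' h
      induction h with
      | refl => exact ⟨w, Relation.ReflTransGen.refl, rfl⟩
      | tail _ h2 ih =>
        obtain ⟨w₁, hw₁, rfl⟩ := ih
        obtain ⟨w₂, hw₂, hfw⟩ := f.isPMorphism.2 w₁ _ h2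
        exact ⟨w₂, hw₁.tail hw₂, hfw⟩
    obtain ⟨w', hw', hfw⟩ := this v' hv'
    exact ⟨w', hw', hfw⟩
  exact ((hW w).image f.toFun).subset hsub

instance : Limits.HasColimits KFrame.{u} where
  has_colimits_of_shape _ _ :=
    { has_colimit := fun D => Limits.HasColimit.mk ⟨KColim.cocone D, KColim.isColimit D⟩ }

instance : Limits.PreservesColimits forgetKFr.{u} where
  preservesColimitsOfShape :=
    { preservesColimit := fun {D} =>
        Limits.preservesColimit_of_preserves_colimit_cocone
          (KColim.isColimit D) (KColim.isColimitType D) }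

/-- The category of Kripke frames and p-morphisms has all small
colimits, the forgetful functor to `Set` preserves them, and a colimit of locally
finite Kripke frames is again locally finite. -/
theorem statement17 :
    Limits.HasColimits KFrame.{u} ∧
    Nonempty (Limits.PreservesColimits forgetKFr.{u}) ∧
    (∀ (J : Type u) [SmallCategory J] (D : J ⥤ KFrame.{u}) (c : Limits.Cocone D),
      Limits.IsColimit c → (∀ j : J, (D.obj j).LocallyFinite) →
      c.pt.LocallyFinite) := by
  refine ⟨inferInstance, ⟨inferInstance⟩, ?_⟩
  intro J _ D c hc hD
  have hQ : (KColim.frame D).LocallyFinite := KColim.frame_locallyFinite D hD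
  let e := (KColim.isColimit D).coconePointUniqueUpToIso hc
  refine locallyFinite_of_surjective e.hom ?_ hQ
  intro v
  exact ⟨e.inv.toFun v, congrFun (congrArg PMor.toFun e.inv_hom_id) v⟩
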